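/- Sum formula consequence at level 2 in depth 2: for every integer m ≥ 1, ∑_{a=0}^{m} (a+1) ζ^{oe}(m−a+1, a+2) + ζ^{oe}(2, m+1) + (m+1) ζ^{oe}(1, m+2) = ζ^o(2) ζ^o(m+1), where ζ^o(s) = ∑_{n≥0} (2n+1)^{−s} = (1−2^{−s})ζ(s) and ζ^{oe}(k,s) = ∑_{m≥0}∑_{n≥1} (2m+1)^{−k}(2m+2n)^{−s}. -/

import Mathlib

/-!
For odd `x = 2i+1` and `y = 2j+1`, write `1/(x² y^(m+1))` as a combination of fractions each
having a power of `x + y = 2i + 2(j+1)` in its denominator. Summed over all `(i, j)`, the three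
groups of terms give the three double zeta terms on the left (the first one after exchanging
`i` and `j`), while the left-hand side gives `ζ^o(2) ζ^o(m+1)`. All series have nonnegative
terms and weight `m + 3 ≥ 4`, hence converge, so the sums may be split.
-/

open Real Finset

/-- The odd zeta function `ζ^o(s) = ∑_{n ≥ 0} 1/(2n+1)^s`. -/
noncomputable def zetaO (s : ℕ) : ℝ := ∑' n : ℕ, 1 / (2 * (n : ℝ) + 1) ^ s

/-- The odd–even double zeta value
`ζ^{oe}(k,s) = ∑_{m ≥ 0} ∑_{n ≥ 1} 1/((2m+1)^k (2m+2n)^s)`. -/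
noncomputable def zetaOE (k s : ℕ) : ℝ :=
  ∑' p : ℕ × ℕ,
    1 / ((2 * (p.1 : ℝ) + 1) ^ k * (2 * (p.1 : ℝ) + 2 * ((p.2 : ℝ) + 1)) ^ s)

theorem one_div_sq_mul_pow_eq_sum {K : Type*} [Field K] {x y : K} (hx : x ≠ 0) (hy : y ≠ 0)
    (hxy : x + y ≠ 0) (m : ℕ) :
    1 / (x ^ 2 * y ^ (m + 1)) =
      (∑ a ∈ range (m + 1), ((a : K) + 1) / (y ^ (m - a + 1) * (x + y) ^ (a + 2))) +
        1 / (x ^ 2 * (x + y) ^ (m + 1)) + ((m : K) + 1) / (x * (x + y) ^ (m + 2)) := by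
  induction m with
  | zero =>
    simp only [zero_add, pow_one, range_one, Nat.sub_self, sum_singleton, Nat.cast_zero]
    field_simp
    ring
  | succ n ih =>
    set S := ∑ a ∈ range (n + 1), ((a : K) + 1) / (y ^ (n - a + 1) * (x + y) ^ (a + 2))
    have hsum : ∑ a ∈ range (n + 2), ((a : K) + 1) / (y ^ (n + 1 - a + 1) * (x + y) ^ (a + 2)) =
        S / y + ((n : K) + 2) / (y * (x + y) ^ (n + 3)) := by
      rw [sum_range_succ, sum_div]
      congr 1
      · refine sum_congr rfl fun a ha => ?_
        rw [Nat.sub_add_comm (mem_range_succ_iff.mp ha), pow_succ]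
        field_simp
      · simp only [Nat.sub_self, zero_add, pow_one, Nat.cast_succ]
        ring
    rw [hsum, eq_sub_of_add_eq (eq_sub_of_add_eq ih.symm)]
    field_simp
    push_cast
    ring

theorem summable_one_div_two_mul_add_one_pow {k : ℕ} (hk : 1 < k) :
    Summable fun n : ℕ => 1 / (2 * (n : ℝ) + 1) ^ k := by
  have h := (summable_one_div_nat_pow.mpr hk).comp_injective
    (fun a b h => by simp only at h; omega : Function.Injective fun n : ℕ => 2 * n + 1)
  simpa [Function.comp_def] using h

theorem summable_one_div_two_mul_add_one_pow_mul {k s : ℕ} (hk : 1 < k) (hs : 1 < s) :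
    Summable fun p : ℕ × ℕ => 1 / (2 * (p.1 : ℝ) + 1) ^ k * (1 / (2 * (p.2 : ℝ) + 1) ^ s) :=
  (summable_one_div_two_mul_add_one_pow hk).mul_of_nonneg
    (summable_one_div_two_mul_add_one_pow hs) (fun _ => by positivity) (fun _ => by positivity)

theorem zetaO_mul_zetaO {k s : ℕ} (hk : 1 < k) (hs : 1 < s) :
    zetaO k * zetaO s =
      ∑' p : ℕ × ℕ, 1 / (2 * (p.1 : ℝ) + 1) ^ k * (1 / (2 * (p.2 : ℝ) + 1) ^ s) :=
  (summable_one_div_two_mul_add_one_pow hk).tsum_mul_tsum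
    (summable_one_div_two_mul_add_one_pow hs) (summable_one_div_two_mul_add_one_pow_mul hk hs)

noncomputable def zetaOETerm (k s : ℕ) (p : ℕ × ℕ) : ℝ :=
  1 / ((2 * (p.1 : ℝ) + 1) ^ k * (2 * (p.1 : ℝ) + 2 * ((p.2 : ℝ) + 1)) ^ s)

theorem zetaOE_eq_tsum (k s : ℕ) : zetaOE k s = ∑' p, zetaOETerm k s p := rfl

theorem zetaOE_eq_tsum_swap (k s : ℕ) : zetaOE k s = ∑' p : ℕ × ℕ, zetaOETerm k s p.swap :=
  ((Equiv.prodComm ℕ ℕ).tsum_eq (zetaOETerm k s)).symm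

theorem summable_zetaOETerm {k s : ℕ} (hs : 2 ≤ s) (hks : 4 ≤ k + s) :
    Summable (zetaOETerm k s) := by
  obtain ⟨t, rfl⟩ := Nat.exists_eq_add_of_le' hs
  refine (summable_one_div_two_mul_add_one_pow_mul (k := k + t) (by omega) one_lt_two).of_nonneg_of_le
    (fun _ => by rw [zetaOETerm]; positivity) fun ⟨i, j⟩ => ?_
  have hi : 2 * (i : ℝ) + 1 ≤ 2 * i + 2 * (j + 1) := by linarith [(j.cast_nonneg : (0 : ℝ) ≤ j)]
  have hj : 2 * (j : ℝ) + 1 ≤ 2 * i + 2 * (j + 1) := by linarith [(i.cast_nonneg : (0 : ℝ) ≤ i)]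
  rw [zetaOETerm, one_div_mul_one_div, pow_add, pow_add, mul_assoc]
  gcongr

theorem one_div_sq_mul_one_div_pow_eq (m i j : ℕ) :
    1 / (2 * (i : ℝ) + 1) ^ 2 * (1 / (2 * (j : ℝ) + 1) ^ (m + 1)) =
      (∑ a ∈ range (m + 1), ((a : ℝ) + 1) * zetaOETerm (m - a + 1) (a + 2) (j, i)) +
        zetaOETerm 2 (m + 1) (i, j) + ((m : ℝ) + 1) * zetaOETerm 1 (m + 2) (i, j) := by
  have hx : 2 * (i : ℝ) + 1 + (2 * j + 1) = 2 * i + 2 * (j + 1) := by ring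
  have hy : 2 * (i : ℝ) + 1 + (2 * j + 1) = 2 * j + 2 * (i + 1) := by ring
  rw [one_div_mul_one_div, one_div_sq_mul_pow_eq_sum (by positivity) (by positivity) (by positivity)]
  simp only [zetaOETerm, mul_one_div, pow_one]
  congr 2
  · rw [hy]
  all_goals rw [hx]

theorem stmt19 (m : ℕ) (hm : 1 ≤ m) :
    (∑ a ∈ Finset.range (m + 1), ((a : ℝ) + 1) * zetaOE (m - a + 1) (a + 2)) +
        zetaOE 2 (m + 1) + ((m : ℝ) + 1) * zetaOE 1 (m + 2) =
      zetaO 2 * zetaO (m + 1) := by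
  have hA : ∀ a ∈ range (m + 1),
      Summable fun p : ℕ × ℕ => ((a : ℝ) + 1) * zetaOETerm (m - a + 1) (a + 2) p.swap :=
    fun a ha => ((summable_zetaOETerm (by omega) (by grind)).prod_symm).mul_left _
  have hB : Summable (zetaOETerm 2 (m + 1)) := summable_zetaOETerm (by omega) (by omega)
  have hC : Summable fun p => ((m : ℝ) + 1) * zetaOETerm 1 (m + 2) p :=
    (summable_zetaOETerm (by omega) (by omega)).mul_left _
  calc _ = ∑' p : ℕ × ℕ, ((∑ a ∈ range (m + 1), ((a : ℝ) + 1) * zetaOETerm (m - a + 1) (a + 2) p.swap) +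
          zetaOETerm 2 (m + 1) p + ((m : ℝ) + 1) * zetaOETerm 1 (m + 2) p) := by
        rw [Summable.tsum_add ((summable_sum hA).add hB) hC, Summable.tsum_add (summable_sum hA) hB,
          Summable.tsum_finsetSum hA, tsum_mul_left]
        simp only [tsum_mul_left, ← zetaOE_eq_tsum_swap, ← zetaOE_eq_tsum]
    _ = ∑' p : ℕ × ℕ, 1 / (2 * (p.1 : ℝ) + 1) ^ 2 * (1 / (2 * (p.2 : ℝ) + 1) ^ (m + 1)) :=
        tsum_congr fun p => (one_div_sq_mul_one_div_pow_eq m p.1 p.2).symm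
    _ = _ := (zetaO_mul_zetaO one_lt_two (by omega)).symm
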